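/- arXiv:math/0310455 — 2 statements merged into one kernel-verified Lean document; each statement's English description precedes it below -/
import Mathlib

section
/- Let σ : U → V be a C² diffeomorphism between open sets of Banach spaces E, F, and let Γ_β : U → L(E, L(E,E)) and Γ_α : V → L(F, L(F,F)) be smooth maps satisfying the compatibility condition Γ_α(σ(y))(dσ(y)u)(dσ(y)v) + d²σ(y)(u,v) = dσ(y)(Γ_β(y)(u)(v)) for all y ∈ U, u, v ∈ E. Then for any smooth curve f in U through x, setting u = f'(0), v = f''(0) + Γ_β(x)(u)(u), the transformed data satisfy (σ∘f)'(0) = dσ(x)(u) and (σ∘f)''(0) + Γ_α(σ(x))((σ∘f)'(0))((σ∘f)'(0)) = dσ(x)(v). -/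
open scoped ContDiff
open Filter Topology

/-! The first derivative of `σ ∘ f` is the chain rule. Differentiating `t ↦ dσ(f t)(f' t)` once
more gives `(σ ∘ f)'' = d²σ(f')(f') + dσ(f'')`, and the compatibility condition at `u = v = f'(0)`
trades `d²σ(u, u)` for `dσ(Γ_β u u) - Γ_α(dσ u)(dσ u)`. -/

section SecondDerivativeOfComp

variable {𝕜 : Type*} [NontriviallyNormedField 𝕜]
  {E F : Type*} [NormedAddCommGroup E] [NormedSpace 𝕜 E] [NormedAddCommGroup F] [NormedSpace 𝕜 F]
  {g : E → F} {U : Set E} {f : 𝕜 → E} {t : 𝕜}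

theorem deriv_comp_eventuallyEq_of_contDiffOn (hU : IsOpen U) (hg : ContDiffOn 𝕜 1 g U)
    (hf : ContDiff 𝕜 1 f) (ht : f t ∈ U) :
    deriv (g ∘ f) =ᶠ[𝓝 t] fun s => fderiv 𝕜 g (f s) (deriv f s) := by
  have hfU : ∀ᶠ s in 𝓝 t, f s ∈ U :=
    hf.continuous.continuousAt.preimage_mem_nhds (hU.mem_nhds ht)
  filter_upwards [hfU] with s hs
  exact fderiv_comp_deriv s
    ((hg.differentiableOn one_ne_zero).differentiableAt (hU.mem_nhds hs))
    (hf.differentiable one_ne_zero s)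

theorem hasDerivAt_deriv_comp_of_contDiffOn (hU : IsOpen U) (hg : ContDiffOn 𝕜 2 g U)
    (hf : ContDiff 𝕜 2 f) (ht : f t ∈ U) :
    HasDerivAt (deriv (g ∘ f))
      (fderiv 𝕜 (fderiv 𝕜 g) (f t) (deriv f t) (deriv f t) +
        fderiv 𝕜 g (f t) (deriv (deriv f) t)) t := by
  have hdg : HasFDerivAt (fderiv 𝕜 g) (fderiv 𝕜 (fderiv 𝕜 g) (f t)) (f t) :=
    (((hg.fderiv_of_isOpen hU le_rfl).differentiableOn one_ne_zero).differentiableAt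
      (hU.mem_nhds ht)).hasFDerivAt
  have hf' : HasDerivAt f (deriv f t) t := (hf.differentiable two_ne_zero t).hasDerivAt
  have hf'' : HasDerivAt (deriv f) (deriv (deriv f) t) t :=
    ((hf.deriv' (n := 1)).differentiable one_ne_zero t).hasDerivAt
  exact ((hdg.comp_hasDerivAt t hf').clm_apply hf'').congr_of_eventuallyEq
    (deriv_comp_eventuallyEq_of_contDiffOn hU (hg.of_le one_le_two) (hf.of_le one_le_two) ht)

end SecondDerivativeOfComp

theorem connection_transition_computation_general
    {E F : Type*} [NormedAddCommGroup E] [NormedSpace ℝ E]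
    [NormedAddCommGroup F] [NormedSpace ℝ F]
    {U : Set E} (hU : IsOpen U)
    {σ : E → F} (hσ : ContDiffOn ℝ 2 σ U)
    {Γβ : E → E →L[ℝ] E →L[ℝ] E} {Γα : F → F →L[ℝ] F →L[ℝ] F}
    (hcompat : ∀ y ∈ U, ∀ u v : E,
      Γα (σ y) (fderiv ℝ σ y u) (fderiv ℝ σ y v) + fderiv ℝ (fderiv ℝ σ) y v u =
        fderiv ℝ σ y (Γβ y u v))
    {f : ℝ → E} (hf : ContDiff ℝ ∞ f) {x : E} (hx : f 0 = x)
    (hxU : x ∈ U) :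
    deriv (σ ∘ f) 0 = fderiv ℝ σ x (deriv f 0) ∧
      deriv (deriv (σ ∘ f)) 0 + Γα (σ x) (deriv (σ ∘ f) 0) (deriv (σ ∘ f) 0) =
        fderiv ℝ σ x (deriv (deriv f) 0 + Γβ x (deriv f 0) (deriv f 0)) := by
  subst hx
  have hf2 : ContDiff ℝ 2 f := hf.of_le ENat.LEInfty.out
  have hfirst : deriv (σ ∘ f) 0 = fderiv ℝ σ (f 0) (deriv f 0) :=
    (deriv_comp_eventuallyEq_of_contDiffOn hU (hσ.of_le one_le_two) (hf2.of_le one_le_two)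
      hxU).eq_of_nhds
  refine ⟨hfirst, ?_⟩
  rw [(hasDerivAt_deriv_comp_of_contDiffOn hU hσ hf2 hxU).deriv, hfirst, map_add,
    ← hcompat (f 0) hxU]
  abel

/-- key computation for the transition functions of `T²M`.  If the Christoffel
symbols `Γ_α`, `Γ_β` satisfy the compatibility condition (1) with respect to a C²
diffeomorphism `σ : U → V`, then for a smooth curve `f` through `x ∈ U`, setting
`u = f'(0)` and `v = f''(0) + Γ_β(x)(u)(u)`, one has `(σ∘f)'(0) = dσ(x)(u)` and
`(σ∘f)''(0) + Γ_α(σ(x))((σ∘f)'(0))((σ∘f)'(0)) = dσ(x)(v)`. -/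
theorem connection_transition_computation
    {E F : Type*} [NormedAddCommGroup E] [NormedSpace ℝ E]
    [NormedAddCommGroup F] [NormedSpace ℝ F]
    {U : Set E} {V : Set F} (hU : IsOpen U) (hV : IsOpen V)
    {σ : E → F} {τ : F → E} (hσ : ContDiffOn ℝ 2 σ U) (hτ : ContDiffOn ℝ 2 τ V)
    (hσV : Set.MapsTo σ U V) (hτU : Set.MapsTo τ V U)
    (hlr : ∀ y ∈ U, τ (σ y) = y) (hrl : ∀ z ∈ V, σ (τ z) = z)
    {Γβ : E → E →L[ℝ] E →L[ℝ] E} {Γα : F → F →L[ℝ] F →L[ℝ] F}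
    (hΓβ : ContDiffOn ℝ ∞ Γβ U) (hΓα : ContDiffOn ℝ ∞ Γα V)
    (hcompat : ∀ y ∈ U, ∀ u v : E,
      Γα (σ y) (fderiv ℝ σ y u) (fderiv ℝ σ y v) + fderiv ℝ (fderiv ℝ σ) y v u =
        fderiv ℝ σ y (Γβ y u v))
    {f : ℝ → E} (hf : ContDiff ℝ ∞ f) (hfU : ∀ t, f t ∈ U) {x : E} (hx : f 0 = x)
    (hxU : x ∈ U) :
    deriv (σ ∘ f) 0 = fderiv ℝ σ x (deriv f 0) ∧
      deriv (deriv (σ ∘ f)) 0 + Γα (σ x) (deriv (σ ∘ f) 0) (deriv (σ ∘ f) 0) =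
        fderiv ℝ σ x (deriv (deriv f) 0 + Γβ x (deriv f 0) (deriv f 0)) :=
  connection_transition_computation_general hU hσ hcompat hf hx hxU
end

section
/- If two vector bundles over the same base manifold admit trivializing covers over the same open cover with identical transition functions, then they are isomorphic as vector bundles; in particular, since T²M (with the connection-induced trivializations) and TM × TM are both characterized by the cocycle {(dσ_{αβ} ∘ ψ_β) × (dσ_{αβ} ∘ ψ_β)}, they are isomorphic. -/
/-! Reading a fiber of `E₁` through `e₁ α` and back through `(e₂ α)⁻¹` gives a linear
isomorphism `E₁ b ≃ E₂ b`, and equality of the transition functions says exactly that it does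
not depend on `α`. Over each base set the resulting map of total spaces is
`(e₂ α)⁻¹ ∘ e₁ α`, hence continuous, and symmetrically for its inverse. -/

open Bundle

namespace Bundle.Trivialization

variable {B F : Type*} [TopologicalSpace B] [TopologicalSpace F] {E₁ E₂ : B → Type*}
  [TopologicalSpace (TotalSpace F E₁)] [TopologicalSpace (TotalSpace F E₂)]

/-- The fiber map `E₁ b → E₂ b` that reads as the identity of `F` in the trivializations
`e₁` and `e₂`. -/
noncomputable def fiberTransfer [∀ b, Nonempty (E₂ b)] (e₁ : Trivialization F (π F E₁))
    (e₂ : Trivialization F (π F E₂)) (b : B) (w : E₁ b) : E₂ b :=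
  e₂.symm b (e₁ ⟨b, w⟩).2

theorem fiberTransfer_fiberTransfer [∀ b, Nonempty (E₁ b)] [∀ b, Nonempty (E₂ b)]
    (e₁ : Trivialization F (π F E₁)) (e₂ : Trivialization F (π F E₂)) {b : B}
    (hb₁ : b ∈ e₁.baseSet) (hb₂ : b ∈ e₂.baseSet) (w : E₁ b) :
    fiberTransfer e₂ e₁ b (fiberTransfer e₁ e₂ b w) = w := by
  simp only [fiberTransfer, e₂.apply_mk_symm hb₂, e₁.symm_apply_apply_mk hb₁]

theorem fiberTransfer_eq_of_transition_eq [∀ b, Nonempty (E₁ b)] [∀ b, Nonempty (E₂ b)]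
    (e₁ e₁' : Trivialization F (π F E₁)) (e₂ e₂' : Trivialization F (π F E₂)) {b : B}
    (hb₁' : b ∈ e₁'.baseSet) (hb₂ : b ∈ e₂.baseSet)
    (htrans : ∀ v : F, (e₁ ⟨b, e₁'.symm b v⟩).2 = (e₂ ⟨b, e₂'.symm b v⟩).2) :
    fiberTransfer e₁ e₂ b = fiberTransfer e₁' e₂' b := by
  funext w
  obtain ⟨v, rfl⟩ : ∃ v, e₁'.symm b v = w := ⟨_, e₁'.symm_apply_apply_mk hb₁' w⟩
  simp only [fiberTransfer, htrans, e₂.symm_apply_apply_mk hb₂, e₁'.apply_mk_symm hb₁']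

/-- Over `e₁.baseSet` the map is `e₂⁻¹ ∘ e₁`, a composition of homeomorphisms. -/
theorem continuousAt_mk_of_eq_fiberTransfer [∀ b, Nonempty (E₂ b)]
    (e₁ : Trivialization F (π F E₁)) (e₂ : Trivialization F (π F E₂))
    (hbase : e₁.baseSet = e₂.baseSet) (f : ∀ b, E₁ b → E₂ b)
    (hf : ∀ b ∈ e₁.baseSet, f b = fiberTransfer e₁ e₂ b) {p : TotalSpace F E₁}
    (hp : p.proj ∈ e₁.baseSet) :
    ContinuousAt (fun q : TotalSpace F E₁ => (⟨q.proj, f q.proj q.2⟩ : TotalSpace F E₂)) p := by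
  have hmaps : Set.MapsTo e₁ e₁.source e₂.target := fun q hq => by
    rw [e₂.target_eq, ← hbase, ← e₁.target_eq]
    exact e₁.map_source hq
  have hcont : ContinuousOn (fun q => e₂.toOpenPartialHomeomorph.symm (e₁ q)) e₁.source :=
    e₂.toOpenPartialHomeomorph.continuousOn_symm.comp e₁.continuousOn hmaps
  have heq : Set.EqOn (fun q => e₂.toOpenPartialHomeomorph.symm (e₁ q))
      (fun q : TotalSpace F E₁ => (⟨q.proj, f q.proj q.2⟩ : TotalSpace F E₂)) e₁.source := by
    intro q hq
    have hq₁ : q.proj ∈ e₁.baseSet := e₁.mem_source.1 hq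
    change e₂.toOpenPartialHomeomorph.symm (e₁ q) = ⟨q.proj, f q.proj q.2⟩
    rw [← e₁.mk_proj_snd hq, ← e₂.mk_symm (hbase ▸ hq₁), hf q.proj hq₁, fiberTransfer]
  exact (hcont.congr heq.symm).continuousAt (e₁.open_source.mem_nhds (e₁.mem_source.2 hp))

theorem continuous_mk_of_eq_fiberTransfer [∀ b, Nonempty (E₂ b)] {ι : Type*}
    (e₁ : ι → Trivialization F (π F E₁)) (e₂ : ι → Trivialization F (π F E₂))
    (hbase : ∀ α, (e₁ α).baseSet = (e₂ α).baseSet) (hcover : ∀ b : B, ∃ α, b ∈ (e₁ α).baseSet)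
    (f : ∀ b, E₁ b → E₂ b) (hf : ∀ α, ∀ b ∈ (e₁ α).baseSet, f b = fiberTransfer (e₁ α) (e₂ α) b) :
    Continuous (fun q : TotalSpace F E₁ => (⟨q.proj, f q.proj q.2⟩ : TotalSpace F E₂)) :=
  continuous_iff_continuousAt.2 fun p =>
    let ⟨α, hα⟩ := hcover p.proj
    continuousAt_mk_of_eq_fiberTransfer (e₁ α) (e₂ α) (hbase α) f (hf α) hα

end Bundle.Trivialization

theorem vectorBundle_iso_of_same_transitions_general
    {B F : Type*} [TopologicalSpace B] [NormedAddCommGroup F] [NormedSpace ℝ F]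
    (E₁ E₂ : B → Type*)
    [∀ b, AddCommGroup (E₁ b)] [∀ b, Module ℝ (E₁ b)] [∀ b, TopologicalSpace (E₁ b)]
    [TopologicalSpace (TotalSpace F E₁)] [FiberBundle F E₁]
    [∀ b, AddCommGroup (E₂ b)] [∀ b, Module ℝ (E₂ b)] [∀ b, TopologicalSpace (E₂ b)]
    [TopologicalSpace (TotalSpace F E₂)] [FiberBundle F E₂]
    {ι : Type*}
    (e₁ : ι → Trivialization F (TotalSpace.proj : TotalSpace F E₁ → B))
    (e₂ : ι → Trivialization F (TotalSpace.proj : TotalSpace F E₂ → B))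
    (he₁ : ∀ α, (e₁ α).IsLinear ℝ) (he₂ : ∀ α, (e₂ α).IsLinear ℝ)
    (hbase : ∀ α, (e₁ α).baseSet = (e₂ α).baseSet)
    (hcover : ∀ b : B, ∃ α, b ∈ (e₁ α).baseSet)
    (htrans : ∀ α β, ∀ b ∈ (e₁ α).baseSet ∩ (e₁ β).baseSet, ∀ v : F,
      (e₁ α ⟨b, (e₁ β).symm b v⟩).2 = (e₂ α ⟨b, (e₂ β).symm b v⟩).2) :
    ∃ φ : ∀ b, E₁ b ≃L[ℝ] E₂ b,
      Continuous (fun p : TotalSpace F E₁ => (⟨p.1, φ p.1 p.2⟩ : TotalSpace F E₂)) ∧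
        Continuous (fun p : TotalSpace F E₂ =>
          (⟨p.1, (φ p.1).symm p.2⟩ : TotalSpace F E₁)) := by
  choose idx hidx using hcover
  have hmem₂ : ∀ α, ∀ b ∈ (e₁ α).baseSet, b ∈ (e₂ α).baseSet := fun α _ hb => hbase α ▸ hb
  let φ : ∀ b, E₁ b ≃L[ℝ] E₂ b := fun b =>
    letI := he₁ (idx b); letI := he₂ (idx b)
    ((e₁ (idx b)).continuousLinearEquivAt ℝ b (hidx b)).trans
      ((e₂ (idx b)).continuousLinearEquivAt ℝ b (hmem₂ _ b (hidx b))).symm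
  have hφ : ∀ α, ∀ b ∈ (e₁ α).baseSet, ⇑(φ b) = (e₁ α).fiberTransfer (e₂ α) b := fun α b hb =>
    Trivialization.fiberTransfer_eq_of_transition_eq _ _ _ _ hb (hmem₂ _ b (hidx b))
      (htrans (idx b) α b ⟨hidx b, hb⟩)
  have hφsymm : ∀ α, ∀ b ∈ (e₂ α).baseSet, ⇑(φ b).symm = (e₂ α).fiberTransfer (e₁ α) b := by
    intro α b hb
    funext w
    apply (φ b).injective
    rw [ContinuousLinearEquiv.apply_symm_apply, hφ α b (hbase α ▸ hb),
      Trivialization.fiberTransfer_fiberTransfer _ _ hb (hbase α ▸ hb)]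
  exact ⟨φ,
    Trivialization.continuous_mk_of_eq_fiberTransfer e₁ e₂ hbase (fun b => ⟨idx b, hidx b⟩) _ hφ,
    Trivialization.continuous_mk_of_eq_fiberTransfer e₂ e₁ (fun α => (hbase α).symm)
      (fun b => ⟨idx b, hmem₂ _ b (hidx b)⟩) _ hφsymm⟩

/-- two vector bundles over the same base admitting trivializing covers
over the same open cover with identical transition functions are isomorphic as vector
bundles (there is a fiberwise continuous-linear-equivalence which is a homeomorphism of
total spaces).  This is the principle by which `T²M`, with the connection-induced
trivializations, is isomorphic to `TM × TM`: both are characterized by the cocycle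
`{(dσ_{αβ} ∘ ψ_β) × (dσ_{αβ} ∘ ψ_β)}`. -/
theorem vectorBundle_iso_of_same_transitions
    {B F : Type*} [TopologicalSpace B] [NormedAddCommGroup F] [NormedSpace ℝ F]
    (E₁ E₂ : B → Type*)
    [∀ b, AddCommGroup (E₁ b)] [∀ b, Module ℝ (E₁ b)] [∀ b, TopologicalSpace (E₁ b)]
    [TopologicalSpace (TotalSpace F E₁)] [FiberBundle F E₁] [VectorBundle ℝ F E₁]
    [∀ b, AddCommGroup (E₂ b)] [∀ b, Module ℝ (E₂ b)] [∀ b, TopologicalSpace (E₂ b)]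
    [TopologicalSpace (TotalSpace F E₂)] [FiberBundle F E₂] [VectorBundle ℝ F E₂]
    {ι : Type*}
    (e₁ : ι → Trivialization F (TotalSpace.proj : TotalSpace F E₁ → B))
    (e₂ : ι → Trivialization F (TotalSpace.proj : TotalSpace F E₂ → B))
    (he₁ : ∀ α, (e₁ α).IsLinear ℝ) (he₂ : ∀ α, (e₂ α).IsLinear ℝ)
    (hbase : ∀ α, (e₁ α).baseSet = (e₂ α).baseSet)
    (hcover : ∀ b : B, ∃ α, b ∈ (e₁ α).baseSet)
    (htrans : ∀ α β, ∀ b ∈ (e₁ α).baseSet ∩ (e₁ β).baseSet, ∀ v : F,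
      (e₁ α ⟨b, (e₁ β).symm b v⟩).2 = (e₂ α ⟨b, (e₂ β).symm b v⟩).2) :
    ∃ φ : ∀ b, E₁ b ≃L[ℝ] E₂ b,
      Continuous (fun p : TotalSpace F E₁ => (⟨p.1, φ p.1 p.2⟩ : TotalSpace F E₂)) ∧
        Continuous (fun p : TotalSpace F E₂ =>
          (⟨p.1, (φ p.1).symm p.2⟩ : TotalSpace F E₁)) :=
  vectorBundle_iso_of_same_transitions_general E₁ E₂ e₁ e₂ he₁ he₂ hbase hcover htrans
end
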